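/- arXiv:2312.00630 — 2 statements merged into one kernel-verified Lean document; each statement's English description precedes it below -/
import Mathlib

section
/- Let B₁ and B₂ be disks of radii r₁, r₂ centered at c₁ = (−r₁ − ε/2, 0) and c₂ = (r₂ + ε/2, 0) respectively, with ε > 0, so that dist(B₁, B₂) = ε. Then the composition R₁∘R₂ of the reflections in ∂B₂ and ∂B₁ has a fixed point p₁ lying inside B₁ on the x₁-axis, and as ε → 0, p₁ = (−√2 √(r₁r₂/(r₁+r₂)) √ε + O(ε), 0). In particular |p₁| / √ε → √(2 r₁ r₂/(r₁+r₂)) as ε → 0⁺. -/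
open Real Filter

/-- Euclidean norm on `ℝ × ℝ`. -/
noncomputable def enorm2 (x : ℝ × ℝ) : ℝ := Real.sqrt (x.1 ^ 2 + x.2 ^ 2)

/-- Inversion (reflection) in the circle of radius `r` centered at `c`. -/
noncomputable def circleRefl (c : ℝ × ℝ) (r : ℝ) (x : ℝ × ℝ) : ℝ × ℝ :=
  c + (r ^ 2 / ((x.1 - c.1) ^ 2 + (x.2 - c.2) ^ 2)) • (x - c)

/-!
On the `x₁`-axis each circle inversion acts as the Möbius map `x ↦ c + r² / (x - c)`, so the
fixed points of `R₁ ∘ R₂` on the axis are the roots of a quadratic whose discriminant is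
`ε (2r₁ + ε)(2r₂ + ε)(2r₁ + 2r₂ + ε)`. The relevant root is `-√ε` times a function of `ε`
that is continuous at `ε = 0`, with value `√(2 r₁ r₂ / (r₁ + r₂))` there. It lies in `B₁`
because `R₂` maps a point to the left of `B₂` into `B₂`, hence outside `B₁`, and `R₁` maps
that point into `B₁`.
-/

noncomputable def axisInversion (c r x : ℝ) : ℝ := c + r ^ 2 / (x - c)

theorem circleRefl_axis (c r x : ℝ) : circleRefl (c, 0) r (x, 0) = (axisInversion c r x, 0) := by
  by_cases hx : x = c
  · simp [circleRefl, axisInversion, hx]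
  · have hx' : x - c ≠ 0 := sub_ne_zero.mpr hx
    simp only [circleRefl, axisInversion, Prod.mk_sub_mk, Prod.smul_mk, Prod.mk_add_mk,
      smul_eq_mul, Prod.mk.injEq]
    constructor <;> field_simp <;> ring

theorem enorm2_axis (x : ℝ) : enorm2 (x, 0) = |x| := by
  simp [enorm2, Real.sqrt_sq_eq_abs]

theorem abs_axisInversion_sub_lt {c r x : ℝ} (hr : 0 < r) (hx : r < |x - c|) :
    |axisInversion c r x - c| < r := by
  rw [axisInversion, add_sub_cancel_left, abs_div, abs_sq, div_lt_iff₀ (hr.trans hx)]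
  nlinarith

theorem axisInversion_comp_eq_self {c₁ c₂ r₁ r₂ x : ℝ} (hr₁ : r₁ ≠ 0) (hx : x ≠ c₂)
    (h : (x - c₁) * ((c₂ - c₁) * (x - c₂) + r₂ ^ 2) = r₁ ^ 2 * (x - c₂)) :
    axisInversion c₁ r₁ (axisInversion c₂ r₂ x) = x := by
  have hx' : x - c₂ ≠ 0 := sub_ne_zero.mpr hx
  have hP : (c₂ - c₁) * (x - c₂) + r₂ ^ 2 ≠ 0 := by
    intro hP
    rw [hP, mul_zero] at h
    exact mul_ne_zero (pow_ne_zero 2 hr₁) hx' h.symm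
  have hy : axisInversion c₂ r₂ x - c₁ = ((c₂ - c₁) * (x - c₂) + r₂ ^ 2) / (x - c₂) := by
    rw [axisInversion]; field_simp; ring
  rw [axisInversion, hy]
  field_simp
  linear_combination -h

theorem abs_axisInversion_comp_sub_lt {c₁ c₂ r₁ r₂ x : ℝ} (hr₁ : 0 < r₁) (hr₂ : 0 < r₂)
    (hsep : c₁ + r₁ < c₂ - r₂) (hx : x < c₂ - r₂) :
    |axisInversion c₁ r₁ (axisInversion c₂ r₂ x) - c₁| < r₁ := by
  have hy := abs_axisInversion_sub_lt hr₂ (x := x) (c := c₂)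
    (by rw [abs_of_neg (by linarith)]; linarith)
  refine abs_axisInversion_sub_lt hr₁ ?_
  rw [abs_lt] at hy
  rw [abs_of_pos (by linarith)]
  linarith

/- `axisFixedPoint` is the root `(-ε (r₁ - r₂) - √disc) / (2S)` of the fixed-point quadratic
`S x² + ε (r₁ - r₂) x + ⋯`, `S = r₁ + r₂ + ε`, with `√ε` factored out of `√disc`. -/
noncomputable def axisFixedPointScale (r₁ r₂ ε : ℝ) : ℝ :=
  (√ε * (r₁ - r₂) + √((2 * r₁ + ε) * (2 * r₂ + ε) * (2 * r₁ + 2 * r₂ + ε))) /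
    (2 * (r₁ + r₂ + ε))

noncomputable def axisFixedPoint (r₁ r₂ ε : ℝ) : ℝ := -√ε * axisFixedPointScale r₁ r₂ ε

section
variable {r₁ r₂ : ℝ}

theorem axisFixedPointScale_pos (hr₁ : 0 < r₁) (hr₂ : 0 < r₂) {ε : ℝ} (hε : 0 ≤ ε) :
    0 < axisFixedPointScale r₁ r₂ ε := by
  have hlt : √ε * |r₁ - r₂| < √((2 * r₁ + ε) * (2 * r₂ + ε) * (2 * r₁ + 2 * r₂ + ε)) := by
    rw [← Real.sqrt_sq_eq_abs, ← Real.sqrt_mul hε]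
    apply Real.sqrt_lt_sqrt (by positivity)
    nlinarith [sq_abs (r₁ - r₂), mul_pos hr₁ hr₂, mul_nonneg hε (mul_pos hr₁ hr₂).le,
      mul_nonneg (mul_nonneg hε hε) (add_pos hr₁ hr₂).le]
  have := mul_le_mul_of_nonneg_left (neg_abs_le (r₁ - r₂)) (Real.sqrt_nonneg ε)
  unfold axisFixedPointScale
  apply div_pos _ (by positivity)
  nlinarith

theorem axisFixedPoint_neg (hr₁ : 0 < r₁) (hr₂ : 0 < r₂) {ε : ℝ} (hε : 0 < ε) :
    axisFixedPoint r₁ r₂ ε < 0 := by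
  have := axisFixedPointScale_pos hr₁ hr₂ hε.le
  have := Real.sqrt_pos.2 hε
  unfold axisFixedPoint
  nlinarith

theorem axisFixedPoint_isRoot (hr₁ : 0 < r₁) (hr₂ : 0 < r₂) {ε : ℝ} (hε : 0 ≤ ε) :
    let x := axisFixedPoint r₁ r₂ ε
    (x - (-r₁ - ε / 2)) * ((r₂ + ε / 2 - (-r₁ - ε / 2)) * (x - (r₂ + ε / 2)) + r₂ ^ 2) =
      r₁ ^ 2 * (x - (r₂ + ε / 2)) := by
  intro x
  have hS : 2 * (r₁ + r₂ + ε) ≠ 0 := by positivity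
  have hs := Real.sq_sqrt hε
  have hq := Real.sq_sqrt
    (by positivity : 0 ≤ (2 * r₁ + ε) * (2 * r₂ + ε) * (2 * r₁ + 2 * r₂ + ε))
  have hx : 2 * (r₁ + r₂ + ε) * x =
      -√ε * (√ε * (r₁ - r₂) + √((2 * r₁ + ε) * (2 * r₂ + ε) * (2 * r₁ + 2 * r₂ + ε))) := by
    simp only [x, axisFixedPoint, axisFixedPointScale]
    field_simp
  apply mul_left_cancel₀ (mul_ne_zero two_ne_zero hS)
  set s := √ε
  set q := √((2 * r₁ + ε) * (2 * r₂ + ε) * (2 * r₁ + 2 * r₂ + ε))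
  set A := 2 * (r₁ + r₂ + ε) * x + ε * (r₁ - r₂)
  linear_combination (A - s * q) * hx + (q ^ 2 - (r₁ - r₂) * (A - s * q)) * hs + ε * hq

theorem axisFixedPointScale_zero (hr₁ : 0 < r₁) (hr₂ : 0 < r₂) :
    axisFixedPointScale r₁ r₂ 0 = √(2 * r₁ * r₂ / (r₁ + r₂)) := by
  have h : 0 < r₁ + r₂ := add_pos hr₁ hr₂
  rw [axisFixedPointScale, Real.sqrt_zero, zero_mul, zero_add, add_zero, add_zero, add_zero,
    add_zero, ← Real.sqrt_sq (by positivity : 0 ≤ 2 * (r₁ + r₂)),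
    ← Real.sqrt_div' _ (by positivity)]
  congr 1
  field_simp

theorem tendsto_axisFixedPointScale (hr₁ : 0 < r₁) (hr₂ : 0 < r₂) :
    Tendsto (axisFixedPointScale r₁ r₂) (nhdsWithin 0 (Set.Ioi 0))
      (nhds √(2 * r₁ * r₂ / (r₁ + r₂))) := by
  rw [← axisFixedPointScale_zero hr₁ hr₂]
  refine (ContinuousAt.tendsto ?_).mono_left nhdsWithin_le_nhds
  unfold axisFixedPointScale
  exact ContinuousAt.div (by fun_prop) (by fun_prop) (by positivity)

theorem enorm2_axisFixedPoint_div_sqrt (hr₁ : 0 < r₁) (hr₂ : 0 < r₂) {ε : ℝ} (hε : 0 < ε) :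
    enorm2 (axisFixedPoint r₁ r₂ ε, 0) / √ε = axisFixedPointScale r₁ r₂ ε := by
  rw [enorm2_axis, abs_of_neg (axisFixedPoint_neg hr₁ hr₂ hε), axisFixedPoint, neg_mul, neg_neg,
    mul_div_cancel_left₀ _ (Real.sqrt_pos.2 hε).ne']

end

/-- For disks `B₁, B₂` of radii `r₁, r₂` centered at `c₁ = (−r₁−ε/2, 0)` and
`c₂ = (r₂+ε/2, 0)` (so that `dist(B₁,B₂) = ε`), the composition `R₁∘R₂` of the
reflections has a fixed point `p₁ = p₁(ε)` lying inside `B₁` on the `x₁`-axis,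
with the asymptotics `|p₁|/√ε → √(2 r₁ r₂/(r₁+r₂))` as `ε → 0⁺`. -/
theorem mixed_reflection_fixed_point_asymptotics
    (r₁ r₂ : ℝ) (hr₁ : 0 < r₁) (hr₂ : 0 < r₂) :
    ∃ p : ℝ → ℝ × ℝ,
      (∀ ε : ℝ, 0 < ε →
        circleRefl ((-r₁ - ε / 2, 0) : ℝ × ℝ) r₁
            (circleRefl ((r₂ + ε / 2, 0) : ℝ × ℝ) r₂ (p ε)) = p ε ∧
        enorm2 (p ε - ((-r₁ - ε / 2, 0) : ℝ × ℝ)) < r₁ ∧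
        (p ε).2 = 0 ∧ (p ε).1 < 0) ∧
      Tendsto (fun ε => enorm2 (p ε) / Real.sqrt ε) (nhdsWithin 0 (Set.Ioi 0))
        (nhds (Real.sqrt (2 * r₁ * r₂ / (r₁ + r₂)))) := by
  refine ⟨fun ε => (axisFixedPoint r₁ r₂ ε, 0), fun ε hε => ?_, ?_⟩
  · have hneg := axisFixedPoint_neg hr₁ hr₂ hε
    have hleft : axisFixedPoint r₁ r₂ ε < r₂ + ε / 2 - r₂ := by linarith
    have hfix : axisInversion (-r₁ - ε / 2) r₁
        (axisInversion (r₂ + ε / 2) r₂ (axisFixedPoint r₁ r₂ ε)) = axisFixedPoint r₁ r₂ ε :=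
      axisInversion_comp_eq_self hr₁.ne' (by linarith) (axisFixedPoint_isRoot hr₁ hr₂ hε.le)
    refine ⟨by rw [circleRefl_axis, circleRefl_axis, hfix], ?_, rfl, hneg⟩
    rw [Prod.mk_sub_mk, sub_zero, enorm2_axis, ← hfix]
    exact abs_axisInversion_comp_sub_lt hr₁ hr₂ (by linarith) hleft
  · refine (tendsto_axisFixedPointScale hr₁ hr₂).congr' ?_
    filter_upwards [self_mem_nhdsWithin] with ε hε
    exact (enorm2_axisFixedPoint_div_sqrt hr₁ hr₂ hε).symm
end

section
/- Let D be a bounded domain in ℝ² with smooth boundary and let u be harmonic in ℝ² \ D̄, continuous up to ∂D, constant on ∂D, with u(x) → 0 as |x| → ∞ and ∮_{∂D} ∂u/∂ν|₊ ds = 0. Then u ≡ 0 in ℝ² \ D̄. -/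
/-!
Fix `p ∈ D` and a disc `B(p, r) ⊆ D`. For `ε > 0`, the function `±(u - λ) - ε log (|x - p|² / r²)`
is harmonic outside `D̄`, nonpositive on `∂D`, and nonpositive on every sufficiently large circle
around `p`, since `u` is bounded there while the logarithm grows. The maximum principle on the
region between `∂D` and such a circle, followed by `ε → 0`, gives `u ≡ λ`; the decay of `u` at
infinity then forces `λ = 0`. This is where the dimension matters: in the plane the fundamental
solution `log |x|` is unbounded at infinity.

The weak maximum principle is proved from the second-derivative test, after perturbing a
subharmonic function by `η x₁²` to make it strictly subharmonic.
-/

open Real Filter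

/-- The Laplacian `∂²f/∂x₁² + ∂²f/∂x₂²` of `f : ℝ × ℝ → ℝ`. -/
noncomputable def lap (f : ℝ × ℝ → ℝ) (x : ℝ × ℝ) : ℝ :=
  deriv (fun s => deriv (fun t => f (t, x.2)) s) x.1 +
  deriv (fun s => deriv (fun t => f (x.1, t)) s) x.2

/-- The gradient of `f : ℝ × ℝ → ℝ` as a pair of partial derivatives. -/
noncomputable def grad2 (f : ℝ × ℝ → ℝ) (x : ℝ × ℝ) : ℝ × ℝ :=
  (fderiv ℝ f x (1, 0), fderiv ℝ f x (0, 1))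

open Set Topology Bornology

theorem le_of_forall_pos_le_add_mul {a b c : ℝ} (h : ∀ ε > 0, a ≤ b + ε * c) : a ≤ b := by
  have hlim : Tendsto (fun ε => b + ε * c) (𝓝[>] 0) (𝓝 b) :=
    ((by fun_prop : Continuous fun ε : ℝ => b + ε * c).tendsto' 0 b (by simp)).mono_left
      nhdsWithin_le_nhds
  exact ge_of_tendsto hlim (eventually_nhdsWithin_of_forall h)

theorem IsLocalMax.deriv_deriv_nonpos {f : ℝ → ℝ} {a : ℝ} (hc : ContinuousAt f a)
    (h : IsLocalMax f a) : deriv (deriv f) a ≤ 0 := by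
  by_contra! hpos
  have hmin : IsLocalMin f a := isLocalMin_of_deriv_deriv_pos hpos h.deriv_eq_zero hc
  have hconst : f =ᶠ[𝓝 a] fun _ => f a := by
    filter_upwards [hmin, h] with x h₁ h₂ using le_antisymm h₂ h₁
  rw [hconst.deriv.deriv_eq] at hpos
  simp at hpos

theorem deriv_deriv_fun_add {𝕜 F : Type*} [NontriviallyNormedField 𝕜] [NormedAddCommGroup F]
    [NormedSpace 𝕜 F] {f g : 𝕜 → F} {a : 𝕜} (hf : ContDiffAt 𝕜 2 f a) (hg : ContDiffAt 𝕜 2 g a) :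
    deriv (deriv fun t => f t + g t) a = deriv (deriv f) a + deriv (deriv g) a := by
  simpa only [iteratedDeriv_succ, iteratedDeriv_zero] using iteratedDeriv_fun_add hf hg

theorem deriv_deriv_fun_sub {𝕜 F : Type*} [NontriviallyNormedField 𝕜] [NormedAddCommGroup F]
    [NormedSpace 𝕜 F] {f g : 𝕜 → F} {a : 𝕜} (hf : ContDiffAt 𝕜 2 f a) (hg : ContDiffAt 𝕜 2 g a) :
    deriv (deriv fun t => f t - g t) a = deriv (deriv f) a - deriv (deriv g) a := by
  simpa only [iteratedDeriv_succ, iteratedDeriv_zero] using iteratedDeriv_fun_sub hf hg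

theorem deriv_deriv_log_sq_add {a b t : ℝ} (h : (t - a) ^ 2 + b ≠ 0) :
    deriv (deriv fun s => log ((s - a) ^ 2 + b)) t
      = 2 * (b - (t - a) ^ 2) / ((t - a) ^ 2 + b) ^ 2 := by
  have hq : ∀ s, HasDerivAt (fun s => (s - a) ^ 2 + b) (2 * (s - a)) s := fun s => by
    simpa using (((hasDerivAt_id s).sub_const a).pow 2).add_const b
  have hd : deriv (fun s => log ((s - a) ^ 2 + b)) =ᶠ[𝓝 t]
      fun s => 2 * (s - a) / ((s - a) ^ 2 + b) := by
    have hq_cont : Continuous fun s : ℝ => (s - a) ^ 2 + b := by fun_prop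
    filter_upwards [hq_cont.continuousAt.eventually_ne h] with s hs
    exact ((hq s).log hs).deriv
  rw [hd.deriv_eq, ((((hasDerivAt_id' t).sub_const a).const_mul 2).fun_div (hq t) h).deriv]
  field_simp
  ring

section Laplacian

variable {f g : ℝ × ℝ → ℝ} {z : ℝ × ℝ}

theorem IsLocalMax.lap_nonpos (hc : ContinuousAt f z) (h : IsLocalMax f z) : lap f z ≤ 0 := by
  have hl : ContinuousAt (fun t : ℝ => (t, z.2)) z.1 := by fun_prop
  have hr : ContinuousAt (fun t : ℝ => (z.1, t)) z.2 := by fun_prop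
  exact add_nonpos ((h.comp_continuous hl).deriv_deriv_nonpos (hc.comp hl))
    ((h.comp_continuous hr).deriv_deriv_nonpos (hc.comp hr))

theorem ContDiffAt.slice_fst {n : WithTop ℕ∞} (hf : ContDiffAt ℝ n f z) :
    ContDiffAt ℝ n (fun t => f (t, z.2)) z.1 :=
  hf.comp z.1 (by fun_prop)

theorem ContDiffAt.slice_snd {n : WithTop ℕ∞} (hf : ContDiffAt ℝ n f z) :
    ContDiffAt ℝ n (fun t => f (z.1, t)) z.2 :=
  hf.comp z.2 (by fun_prop)

theorem lap_add (hf : ContDiffAt ℝ 2 f z) (hg : ContDiffAt ℝ 2 g z) :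
    lap (fun x => f x + g x) z = lap f z + lap g z := by
  simp only [lap]
  rw [deriv_deriv_fun_add hf.slice_fst hg.slice_fst, deriv_deriv_fun_add hf.slice_snd hg.slice_snd]
  ring

theorem lap_sub (hf : ContDiffAt ℝ 2 f z) (hg : ContDiffAt ℝ 2 g z) :
    lap (fun x => f x - g x) z = lap f z - lap g z := by
  simp only [lap]
  rw [deriv_deriv_fun_sub hf.slice_fst hg.slice_fst, deriv_deriv_fun_sub hf.slice_snd hg.slice_snd]
  ring

theorem lap_const_mul (c : ℝ) (f : ℝ × ℝ → ℝ) (z : ℝ × ℝ) :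
    lap (fun x => c * f x) z = c * lap f z := by
  simp only [lap, deriv_const_mul_field']
  ring

theorem lap_neg (f : ℝ × ℝ → ℝ) (z : ℝ × ℝ) : lap (-f) z = -lap f z := by
  simp only [lap, Pi.neg_apply, deriv.fun_neg']
  ring

theorem lap_fst_sq (z : ℝ × ℝ) : lap (fun x => x.1 ^ 2) z = 2 := by
  simp [lap]

end Laplacian

-- The squared Euclidean distance: `dist` on `ℝ × ℝ` is the sup distance.
def sqDist (p x : ℝ × ℝ) : ℝ := (x.1 - p.1) ^ 2 + (x.2 - p.2) ^ 2

section SqDist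

variable (p : ℝ × ℝ)

theorem contDiff_sqDist : ContDiff ℝ 2 (sqDist p) := by
  unfold sqDist; fun_prop

theorem continuous_sqDist : Continuous (sqDist p) :=
  (contDiff_sqDist p).continuous

theorem dist_sq_le_sqDist (x : ℝ × ℝ) : dist x p ^ 2 ≤ sqDist p x := by
  rw [Prod.dist_eq, Real.dist_eq, Real.dist_eq, sqDist]
  rcases le_total |x.1 - p.1| |x.2 - p.2| with h | h
  · rw [max_eq_right h, sq_abs]; nlinarith
  · rw [max_eq_left h, sq_abs]; nlinarith

theorem isBounded_setOf_sqDist_lt (c : ℝ) : IsBounded {x | sqDist p x < c} := by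
  refine (Metric.isBounded_closedBall (x := p) (r := √c)).subset fun x hx => ?_
  exact Real.le_sqrt_of_sq_le ((dist_sq_le_sqDist p x).trans hx.le)

theorem lap_log_sqDist {z : ℝ × ℝ} (hz : sqDist p z ≠ 0) :
    lap (fun x => log (sqDist p x)) z = 0 := by
  have hz' : (z.2 - p.2) ^ 2 + (z.1 - p.1) ^ 2 ≠ 0 := by rw [add_comm]; exact hz
  simp only [lap, sqDist, add_comm ((z.1 - p.1) ^ 2)]
  rw [deriv_deriv_log_sq_add hz, deriv_deriv_log_sq_add hz']
  ring

end SqDist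

section MaximumPrinciple

variable {Ω : Set (ℝ × ℝ)} {w : ℝ × ℝ → ℝ} {M : ℝ}

theorem le_of_forall_mem_frontier_le_of_lap_pos (hΩ : IsOpen Ω) (hcpt : IsCompact (closure Ω))
    (hw : ContinuousOn w (closure Ω)) (hlap : ∀ z ∈ Ω, 0 < lap w z)
    (hbd : ∀ z ∈ frontier Ω, w z ≤ M) {x : ℝ × ℝ} (hx : x ∈ Ω) : w x ≤ M := by
  obtain ⟨z, hz, hmax⟩ := hcpt.exists_isMaxOn ⟨x, subset_closure hx⟩ hw
  have hzΩ : z ∉ Ω := fun hzΩ => by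
    have hnhds : closure Ω ∈ 𝓝 z := mem_of_superset (hΩ.mem_nhds hzΩ) subset_closure
    exact (hlap z hzΩ).not_ge ((hmax.isLocalMax hnhds).lap_nonpos (hw.continuousAt hnhds))
  exact (hmax (subset_closure hx)).trans (hbd z ⟨hz, fun h => hzΩ (interior_subset h)⟩)

theorem le_of_forall_mem_frontier_le_of_lap_nonneg (hΩ : IsOpen Ω) (hb : IsBounded Ω)
    (hw : ContinuousOn w (closure Ω)) (hw₂ : ∀ z ∈ Ω, ContDiffAt ℝ 2 w z)
    (hlap : ∀ z ∈ Ω, 0 ≤ lap w z) (hbd : ∀ z ∈ frontier Ω, w z ≤ M) {x : ℝ × ℝ} (hx : x ∈ Ω) :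
    w x ≤ M := by
  obtain ⟨Q, hQ⟩ := hb.isCompact_closure.bddAbove_image
    (f := fun z : ℝ × ℝ => z.1 ^ 2) (by fun_prop)
  refine le_of_forall_pos_le_add_mul (c := Q) fun η hη => ?_
  have hstrict : w x + η * x.1 ^ 2 ≤ M + η * Q := by
    refine le_of_forall_mem_frontier_le_of_lap_pos (w := fun z => w z + η * z.1 ^ 2) hΩ
      hb.isCompact_closure (hw.add (by fun_prop)) (fun z hz => ?_) (fun z hz => ?_) hx
    · rw [lap_add (hw₂ z hz) (by fun_prop), lap_const_mul, lap_fst_sq]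
      linarith [hlap z hz]
    · exact add_le_add (hbd z hz) (mul_le_mul_of_nonneg_left
        (hQ (mem_image_of_mem _ (frontier_subset_closure hz))) hη.le)
  linarith [mul_nonneg hη.le (sq_nonneg x.1)]

end MaximumPrinciple

theorem eventually_atTop_forall_le_of_cocompact {X : Type*} [TopologicalSpace X] {f : X → ℝ}
    (hf : Continuous f) {P : X → Prop} (h : ∀ᶠ x in cocompact X, P x) :
    ∀ᶠ c in atTop, ∀ x, c ≤ f x → P x := by
  obtain ⟨K, hK, hKP⟩ := mem_cocompact.1 h
  obtain ⟨m, hm⟩ := hK.bddAbove_image hf.continuousOn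
  filter_upwards [eventually_gt_atTop m] with c hc x hx
  exact hKP fun hxK => (hx.trans (hm (mem_image_of_mem f hxK))).not_gt hc

theorem IsOpen.compl_closure_union_frontier {X : Type*} [TopologicalSpace X] {D : Set X}
    (hD : IsOpen D) : (closure D)ᶜ ∪ frontier D = Dᶜ := by
  rw [hD.frontier_eq]
  ext x
  have := @subset_closure _ _ D x
  by_cases x ∈ closure D <;> simp_all

theorem IsOpen.closure_compl_closure_subset {X : Type*} [TopologicalSpace X] {D : Set X}
    (hD : IsOpen D) : closure (closure D)ᶜ ⊆ Dᶜ := by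
  rw [closure_compl]
  exact compl_subset_compl.2 hD.subset_interior_closure

theorem frontier_setOf_lt_inter_compl_closure_subset {X : Type*} [TopologicalSpace X]
    {f : X → ℝ} (hf : Continuous f) (c : ℝ) (D : Set X) :
    frontier ({x | f x < c} ∩ (closure D)ᶜ) ⊆ {x | f x = c} ∪ frontier D := by
  refine (frontier_inter_subset _ _).trans (union_subset_union ?_ ?_)
  · exact inter_subset_left.trans (frontier_lt_subset_eq hf continuous_const)
  · rw [frontier_compl]
    exact inter_subset_right.trans frontier_closure_subset

theorem le_add_mul_log_sqDist_of_lap_nonneg {D : Set (ℝ × ℝ)} (hD : IsOpen D) {p : ℝ × ℝ}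
    {r : ℝ} (hr : 0 < r) (hrD : ∀ x ∉ D, r ^ 2 ≤ sqDist p x) {u : ℝ × ℝ → ℝ} {lam ε c : ℝ}
    (hcont : ContinuousOn u Dᶜ) (hsmooth : ContDiffOn ℝ 2 u (closure D)ᶜ)
    (hlap : ∀ x ∉ closure D, 0 ≤ lap u x) (hbdry : ∀ x ∈ frontier D, u x ≤ lam) (hε : 0 ≤ ε)
    (hcircle : ∀ x, sqDist p x = c → u x ≤ lam + ε * (log c - log (r ^ 2)))
    {y : ℝ × ℝ} (hy : y ∉ closure D) (hyc : sqDist p y < c) :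
    u y ≤ lam + ε * (log (sqDist p y) - log (r ^ 2)) := by
  set Ω := {x | sqDist p x < c} ∩ (closure D)ᶜ
  have hΩD : closure Ω ⊆ Dᶜ :=
    (closure_mono inter_subset_right).trans hD.closure_compl_closure_subset
  have hsq_ne : ∀ x ∉ D, sqDist p x ≠ 0 := fun x hx => ((pow_pos hr 2).trans_le (hrD x hx)).ne'
  have hu₂ : ∀ z ∈ Ω, ContDiffAt ℝ 2 u z := fun z hz =>
    hsmooth.contDiffAt (isClosed_closure.isOpen_compl.mem_nhds hz.2)
  have hL₂ : ∀ z ∉ D, ContDiffAt ℝ 2 (fun x => ε * log (sqDist p x)) z := fun z hz =>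
    contDiffAt_const.mul ((contDiff_sqDist p).contDiffAt.log (hsq_ne z hz))
  have key : u y - ε * log (sqDist p y) ≤ lam - ε * log (r ^ 2) := by
    refine le_of_forall_mem_frontier_le_of_lap_nonneg (w := fun x => u x - ε * log (sqDist p x))
      ((isOpen_lt (continuous_sqDist p) continuous_const).inter isClosed_closure.isOpen_compl)
      ((isBounded_setOf_sqDist_lt p c).subset inter_subset_left)
      ((hcont.mono hΩD).sub (continuousOn_const.mul
        ((continuous_sqDist p).continuousOn.log fun x hx => hsq_ne x (hΩD hx))))
      (fun z hz => ?_) (fun z hz => ?_) (fun z hz => ?_) ⟨hyc, hy⟩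
    · exact (hu₂ z hz).sub (hL₂ z (hΩD (subset_closure hz)))
    · rw [lap_sub (hu₂ z hz) (hL₂ z (hΩD (subset_closure hz))), lap_const_mul,
        lap_log_sqDist p (hsq_ne z (hΩD (subset_closure hz)))]
      linarith [hlap z hz.2]
    · rcases frontier_setOf_lt_inter_compl_closure_subset (continuous_sqDist p) c D hz with
        hzc | hzD
      · rw [hzc.out]
        linarith [hcircle z hzc]
      · have hlog := log_le_log (by positivity) (hrD z (hD.frontier_eq ▸ hzD).2)
        linarith [hbdry z hzD, mul_le_mul_of_nonneg_left hlog hε]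
  linarith

theorem le_of_lap_nonneg_of_isBoundedUnder_exterior {D : Set (ℝ × ℝ)} (hD : IsOpen D)
    (hDne : D.Nonempty) {u : ℝ × ℝ → ℝ} {lam : ℝ} (hcont : ContinuousOn u Dᶜ)
    (hsmooth : ContDiffOn ℝ 2 u (closure D)ᶜ) (hlap : ∀ x ∉ closure D, 0 ≤ lap u x)
    (hbdry : ∀ x ∈ frontier D, u x ≤ lam)
    (hbdd : IsBoundedUnder (· ≤ ·) (cocompact (ℝ × ℝ)) u) {y : ℝ × ℝ} (hy : y ∉ closure D) :
    u y ≤ lam := by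
  obtain ⟨B, hB⟩ := hbdd
  obtain ⟨p, hp⟩ := hDne
  obtain ⟨r, hr, hball⟩ := Metric.isOpen_iff.1 hD p hp
  have hrD : ∀ x ∉ D, r ^ 2 ≤ sqDist p x := fun x hx => not_lt.1 fun h =>
    hx (hball (pow_lt_pow_iff_left₀ dist_nonneg hr.le two_ne_zero |>.1
      ((dist_sq_le_sqDist p x).trans_lt h)))
  refine le_of_forall_pos_le_add_mul (c := log (sqDist p y) - log (r ^ 2)) fun ε hε => ?_
  obtain ⟨c, hcB, hyc, hclog⟩ : ∃ c, (∀ x, c ≤ sqDist p x → u x ≤ B) ∧ sqDist p y < c ∧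
      (B - lam) / ε + log (r ^ 2) ≤ log c :=
    ((eventually_atTop_forall_le_of_cocompact (continuous_sqDist p) hB).and
      ((eventually_gt_atTop _).and (tendsto_log_atTop.eventually_ge_atTop _))).exists
  refine le_add_mul_log_sqDist_of_lap_nonneg hD hr hrD hcont hsmooth hlap hbdry hε.le
    (fun x hx => ?_) hy hyc
  have := (div_le_iff₀' hε).1 (by linarith : (B - lam) / ε ≤ log c - log (r ^ 2))
  linarith [hcB x hx.ge]

theorem norm_le_enorm2 (x : ℝ × ℝ) : ‖x‖ ≤ enorm2 x := by
  rw [Prod.norm_def, Real.norm_eq_abs, Real.norm_eq_abs, enorm2]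
  exact max_le (Real.abs_le_sqrt (by nlinarith)) (Real.abs_le_sqrt (by nlinarith))

theorem tendsto_cocompact_zero_of_abs_le_div_enorm2 {u : ℝ × ℝ → ℝ} {C R : ℝ}
    (h : ∀ x, R ≤ enorm2 x → |u x| ≤ C / enorm2 x) : Tendsto u (cocompact (ℝ × ℝ)) (𝓝 0) := by
  have henorm : Tendsto enorm2 (cocompact (ℝ × ℝ)) atTop :=
    tendsto_atTop_mono norm_le_enorm2 tendsto_norm_cocompact_atTop
  exact squeeze_zero_norm' ((henorm.eventually_ge_atTop R).mono fun x hx => h x hx)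
    (tendsto_const_nhds.div_atTop henorm)

theorem exterior_uniqueness_general
    (D : Set (ℝ × ℝ)) (hDopen : IsOpen D) (hDbdd : Bornology.IsBounded D)
    (u : ℝ × ℝ → ℝ) (lam : ℝ)
    (hcont : ContinuousOn u ((closure D)ᶜ ∪ frontier D))
    (hsmooth : ContDiffOn ℝ 2 u (closure D)ᶜ)
    (hharm : ∀ x ∉ closure D, lap u x = 0)
    (hbdry : ∀ x ∈ frontier D, u x = lam)
    (hdecay : ∃ C > 0, ∃ R > 0, ∀ x : ℝ × ℝ, R ≤ enorm2 x → |u x| ≤ C / enorm2 x)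
    (γ : ℝ → ℝ × ℝ)
    (hfront : frontier D = γ '' Set.Icc 0 1) :
    ∀ x ∉ closure D, u x = 0 := by
  have hDne : D.Nonempty := nonempty_iff_ne_empty.2 fun h => by simp [h, Icc_eq_empty_iff] at hfront
  obtain ⟨C, -, R, -, hdecay⟩ := hdecay
  have hlim := tendsto_cocompact_zero_of_abs_le_div_enorm2 hdecay
  rw [hDopen.compl_closure_union_frontier] at hcont
  have hconst : ∀ x ∉ closure D, u x = lam := fun x hx => le_antisymm
    (le_of_lap_nonneg_of_isBoundedUnder_exterior hDopen hDne hcont hsmooth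
      (fun z hz => (hharm z hz).ge) (fun z hz => (hbdry z hz).le) hlim.isBoundedUnder_le hx)
    (neg_le_neg_iff.1 <| le_of_lap_nonneg_of_isBoundedUnder_exterior hDopen hDne hcont.neg
      hsmooth.neg (fun z hz => by rw [lap_neg, hharm z hz, neg_zero])
      (fun z hz => neg_le_neg (hbdry z hz).ge) hlim.neg.isBoundedUnder_le hx)
  have hlam : lam = 0 := by
    refine tendsto_nhds_unique (tendsto_const_nhds.congr' ?_) hlim
    filter_upwards [hDbdd.isCompact_closure.compl_mem_cocompact] with x hx using (hconst x hx).symm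
  exact fun x hx => (hconst x hx).trans hlam

/-- Uniqueness for the exterior problem: if `u` is harmonic outside a bounded
smooth domain `D`, continuous up to the boundary, constant on `∂D`, decays like
`O(|x|⁻¹)` at infinity and has vanishing total exterior flux `∮_{∂D} ∂u/∂ν ds = 0`
(expressed through a `C¹` parametrization `γ` of `∂D` with outward rotated tangent),
then `u ≡ 0` in the exterior of `D`. -/
theorem exterior_uniqueness
    (D : Set (ℝ × ℝ)) (hDopen : IsOpen D) (hDbdd : Bornology.IsBounded D)
    (u : ℝ × ℝ → ℝ) (lam : ℝ)
    (hcont : ContinuousOn u ((closure D)ᶜ ∪ frontier D))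
    (hsmooth : ContDiffOn ℝ 2 u (closure D)ᶜ)
    (hharm : ∀ x ∉ closure D, lap u x = 0)
    (hbdry : ∀ x ∈ frontier D, u x = lam)
    (hdecay : ∃ C > 0, ∃ R > 0, ∀ x : ℝ × ℝ, R ≤ enorm2 x → |u x| ≤ C / enorm2 x)
    (γ : ℝ → ℝ × ℝ) (hγ : ContDiff ℝ 1 γ) (hclosed : γ 0 = γ 1)
    (hsimple : ∀ s ∈ Set.Ico (0 : ℝ) 1, ∀ t ∈ Set.Ico (0 : ℝ) 1, γ s = γ t → s = t)
    (hreg : ∀ t, deriv γ t ≠ 0)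
    (hfront : frontier D = γ '' Set.Icc 0 1)
    (houtward : ∀ t : ℝ, ∃ δ₀ > (0 : ℝ), ∀ δ ∈ Set.Ioo 0 δ₀,
      γ t + δ • (((deriv γ t).2, -(deriv γ t).1) : ℝ × ℝ) ∉ closure D)
    (hflux : ∫ t in (0 : ℝ)..1,
        ((grad2 u (γ t)).1 * (deriv γ t).2 - (grad2 u (γ t)).2 * (deriv γ t).1) = 0) :
    ∀ x ∉ closure D, u x = 0 :=
  exterior_uniqueness_general D hDopen hDbdd u lam hcont hsmooth hharm hbdry hdecay γ hfront
end
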